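/- arXiv:2602.04207 — 2 statements merged into one kernel-verified Lean document; each statement's English description precedes it below -/
import Mathlib

section
/- With L : L²(D) → L²(0,K) as above, the multi-frequency far-field operator F : L²(0,K) → L²(0,K) admits the symmetric factorization F = L T L*, where T : L²(D) → L²(D) is the multiplication operator (Tu)(y) = (2π)^{-1/2} S(y) e^{-iκ(c⁻¹ x̂·y - t₀)} u(y), with S ∈ L^∞(D) real-valued. -/
open scoped RealInnerProductSpace
open MeasureTheory

/-!
Substituting the definition of `u^∞`, `(Fφ)(τ)` becomes a double integral over `(0,K) × D` of
the unimodular kernel `e^{-i(κ+τ-s) f(y)}` against `φ(s) S(y)`, which is absolutely integrable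
since `φ` and `S` are. Fubini exchanges the two integrals, and the kernel splits as
`e^{-iτ f(y)} · e^{-iκ f(y)} · e^{i s f(y)}`: the three factors are `L`, `T` and `L*`.
-/

section KernelSwap

variable {α β 𝕜 : Type*} [RCLike 𝕜] [MeasurableSpace α] [MeasurableSpace β]
  {μ : Measure α} {ν : Measure β} [SFinite μ] [SFinite ν]

theorem integral_integral_kernel_swap {k : α × β → 𝕜} (hk : AEStronglyMeasurable k (μ.prod ν))
    {C : ℝ} (hkC : ∀ᵐ z ∂μ.prod ν, ‖k z‖ ≤ C) {g : α → 𝕜} {h : β → 𝕜}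
    (hg : Integrable g μ) (hh : Integrable h ν) :
    ∫ s, (∫ y, k (s, y) * h y ∂ν) * g s ∂μ = ∫ y, h y * ∫ s, k (s, y) * g s ∂μ ∂ν := by
  have hint : Integrable (fun z => k z * (g z.1 * h z.2)) (μ.prod ν) :=
    (hg.mul_prod hh).bdd_mul hk hkC
  calc ∫ s, (∫ y, k (s, y) * h y ∂ν) * g s ∂μ
      = ∫ s, ∫ y, k (s, y) * (g s * h y) ∂ν ∂μ := by
        congr with s
        rw [← integral_mul_const]
        congr with y
        ring
    _ = ∫ y, ∫ s, k (s, y) * (g s * h y) ∂μ ∂ν := integral_integral_swap hint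
    _ = ∫ y, h y * ∫ s, k (s, y) * g s ∂μ ∂ν := by
        congr with y
        rw [← integral_const_mul]
        congr with s
        ring

end KernelSwap

theorem farfield_factorization_general
    (D : Set (EuclideanSpace ℝ (Fin 3)))
    (S : EuclideanSpace ℝ (Fin 3) → ℝ) (hSint : IntegrableOn S D)
    (xh : EuclideanSpace ℝ (Fin 3))
    (c t₀ κ K : ℝ)
    (f : EuclideanSpace ℝ (Fin 3) → ℝ) (hf : ∀ y, f y = c⁻¹ * ⟪xh, y⟫ - t₀)
    (uinf : ℝ → ℂ)
    (huinf : ∀ ω : ℝ, uinf ω = (Real.sqrt (2 * Real.pi))⁻¹ *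
      ∫ y in D, Complex.exp (-Complex.I * ω * (f y)) * (S y : ℂ))
    (φ : ℝ → ℂ) (hφ : IntegrableOn φ (Set.Ioo (0:ℝ) K)) :
    ∀ τ : ℝ,
      (∫ s in Set.Ioo (0:ℝ) K, uinf (κ + τ - s) * φ s) =
        ∫ y in D, Complex.exp (-Complex.I * τ * (f y)) *
          (((Real.sqrt (2 * Real.pi))⁻¹ : ℝ) * (S y : ℂ) *
            Complex.exp (-Complex.I * κ * (f y)) *
          (∫ s in Set.Ioo (0:ℝ) K, Complex.exp (Complex.I * s * (f y)) * φ s)) := by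
  intro τ
  have hfc : Continuous f := by
    rw [funext hf]
    fun_prop
  set k : ℝ × EuclideanSpace ℝ (Fin 3) → ℂ :=
    fun z => Complex.exp (-Complex.I * ↑(κ + τ - z.1) * f z.2)
  have hk : Continuous k := by fun_prop
  have hk_norm : ∀ z, ‖k z‖ ≤ 1 := fun z => by simp [k, Complex.norm_exp]
  have hk_split : ∀ s y, k (s, y) = Complex.exp (-Complex.I * τ * f y) *
      Complex.exp (-Complex.I * κ * f y) * Complex.exp (Complex.I * s * f y) := by
    intro s y
    simp only [k, ← Complex.exp_add]
    push_cast
    ring_nf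
  have hswap := integral_integral_kernel_swap hk.aestronglyMeasurable
    (Filter.Eventually.of_forall hk_norm) hφ (h := fun y => (S y : ℂ)) hSint.ofReal
  calc (∫ s in Set.Ioo (0:ℝ) K, uinf (κ + τ - s) * φ s)
      = (Real.sqrt (2 * Real.pi))⁻¹ * ∫ s in Set.Ioo (0:ℝ) K,
          (∫ y in D, k (s, y) * (S y : ℂ)) * φ s := by
        rw [← integral_const_mul]
        congr with s
        rw [huinf, mul_assoc]
    _ = _ := by
        rw [hswap, ← integral_const_mul]
        congr with y
        simp_rw [hk_split, mul_assoc, integral_const_mul]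
        push_cast
        ring

/-- Symmetric factorization `F = L T L*` of the multi-frequency
far-field operator: for every `φ ∈ L²(0,K)` and every `τ`,
`∫₀^K u^∞(xh, κ+τ-s) φ(s) ds`
`  = ∫_D e^{-iτ f(y)} · (2π)^{-1/2} S(y) e^{-iκ f(y)} · (∫₀^K e^{i s f(y)} φ(s) ds) dy`,
where `f(y) = c⁻¹ xh·y - t₀`; i.e. `F φ = (L ∘ T ∘ L*) φ` with `T` the
multiplication operator by `(2π)^{-1/2} S(y) e^{-iκ f(y)}` and `L*` the adjoint
of the data-to-pattern operator `L`. -/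
theorem farfield_factorization
    (D : Set (EuclideanSpace ℝ (Fin 3))) (hmeas : MeasurableSet D)
    (hb : Bornology.IsBounded D)
    (S : EuclideanSpace ℝ (Fin 3) → ℝ) (hSint : IntegrableOn S D)
    (CS : ℝ) (hSbd : ∀ y ∈ D, |S y| ≤ CS)
    (xh : EuclideanSpace ℝ (Fin 3)) (hx : ‖xh‖ = 1)
    (c t₀ κ K : ℝ) (hc : 0 < c) (hK : 0 < K)
    (f : EuclideanSpace ℝ (Fin 3) → ℝ) (hf : ∀ y, f y = c⁻¹ * ⟪xh, y⟫ - t₀)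
    (uinf : ℝ → ℂ)
    (huinf : ∀ ω : ℝ, uinf ω = (Real.sqrt (2 * Real.pi))⁻¹ *
      ∫ y in D, Complex.exp (-Complex.I * ω * (f y)) * (S y : ℂ))
    (φ : ℝ → ℂ) (hφ : IntegrableOn φ (Set.Ioo (0:ℝ) K)) :
    ∀ τ : ℝ,
      (∫ s in Set.Ioo (0:ℝ) K, uinf (κ + τ - s) * φ s) =
        ∫ y in D, Complex.exp (-Complex.I * τ * (f y)) *
          (((Real.sqrt (2 * Real.pi))⁻¹ : ℝ) * (S y : ℂ) *
            Complex.exp (-Complex.I * κ * (f y)) *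
          (∫ s in Set.Ioo (0:ℝ) K, Complex.exp (Complex.I * s * (f y)) * φ s)) :=
  farfield_factorization_general D S hSint xh c t₀ κ K f hf uinf huinf φ hφ
end

section
/- Let A : X → Y be a compact linear operator between Hilbert spaces with singular system (μ_n, φ_n, g_n). The equation Aφ = f is solvable if and only if f ∈ N(A*)^⊥ and Σ_{n=1}^∞ μ_n^{-2} |⟨f, g_n⟩|² < ∞; in this case φ = Σ_n μ_n^{-1} ⟨f, g_n⟩ φ_n is a solution. -/
open scoped ComplexInnerProductSpace InnerProductSpace

/-! If `f = A u`, then `⟪h, f⟫ = ⟪A* h, u⟫ = 0` for `h ∈ N(A*)`, and `⟪g n, f⟫ = μ n ⟪φ n, u⟫`, so the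
Picard series is Bessel's sum for `u`. Conversely, the Picard condition says the coefficients
`μ n⁻¹ ⟪g n, f⟫` are square summable, so `∑ μ n⁻¹ ⟪g n, f⟫ φ n` converges in `X`; `A` maps it to
`∑ ⟪g n, f⟫ g n`, which is `f` because `f` lies in `N(A*)ᗮ`, the closed span of the `g n`. -/

section Orthonormal

variable {𝕜 E ι : Type*} [RCLike 𝕜] [NormedAddCommGroup E] [InnerProductSpace 𝕜 E] {v : ι → E}

theorem Orthonormal.summable_smul_of_summable_norm_sq [CompleteSpace E] (hv : Orthonormal 𝕜 v)
    {c : ι → 𝕜} (hc : Summable fun i => ‖c i‖ ^ 2) : Summable fun i => c i • v i := by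
  simpa using (hv.orthogonalFamily.summable_iff_norm_sq_summable c).2 hc

theorem Orthonormal.inner_tsum_smul (hv : Orthonormal 𝕜 v) {c : ι → 𝕜}
    (hc : Summable fun j => c j • v j) (i : ι) : ⟪v i, ∑' j, c j • v j⟫_𝕜 = c i := by
  classical
  rw [← innerSL_apply_apply 𝕜, (innerSL 𝕜 (v i)).map_tsum hc]
  simp [orthonormal_iff_ite.1 hv]

theorem Orthonormal.tsum_inner_smul_eq_of_mem_closure_span [CompleteSpace E]
    (hv : Orthonormal 𝕜 v) {x : E}
    (hx : x ∈ (Submodule.span 𝕜 (Set.range v)).topologicalClosure) :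
    ∑' i, ⟪v i, x⟫_𝕜 • v i = x := by
  set K := Submodule.span 𝕜 (Set.range v)
  have hsum : Summable fun i => ⟪v i, x⟫_𝕜 • v i :=
    hv.summable_smul_of_summable_norm_sq (hv.inner_products_summable x)
  set d := x - ∑' i, ⟪v i, x⟫_𝕜 • v i
  have hd_closure : d ∈ K.topologicalClosure := by
    refine K.topologicalClosure.sub_mem hx (K.isClosed_topologicalClosure.mem_of_tendsto
      hsum.hasSum (Filter.Eventually.of_forall fun s => ?_))
    exact K.topologicalClosure.sum_mem fun i _ => K.topologicalClosure.smul_mem _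
      (K.le_topologicalClosure (Submodule.subset_span ⟨i, rfl⟩))
  have hd_orth : d ∈ K.topologicalClosureᗮ := by
    rw [Submodule.orthogonal_closure, Submodule.mem_orthogonal]
    refine fun u hu => (Submodule.mem_orthogonal_singleton_iff_inner_left (𝕜 := 𝕜)).1 ?_
    refine Submodule.span_le.2 ?_ hu
    rintro _ ⟨i, rfl⟩
    rw [SetLike.mem_coe, Submodule.mem_orthogonal_singleton_iff_inner_left, inner_sub_right,
      hv.inner_tsum_smul hsum, sub_self]
  have : d = 0 := inner_self_eq_zero.1 ((Submodule.mem_orthogonal _ d).1 hd_orth d hd_closure)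
  exact (sub_eq_zero.1 this).symm

end Orthonormal

section SingularSystem

variable {𝕜 X Y ι : Type*} [RCLike 𝕜]
  [NormedAddCommGroup X] [InnerProductSpace 𝕜 X] [CompleteSpace X]
  [NormedAddCommGroup Y] [InnerProductSpace 𝕜 Y] [CompleteSpace Y]
  {A : X →L[𝕜] Y} {μ : ι → ℝ} {φ : ι → X} {g : ι → Y}

theorem ContinuousLinearMap.inner_apply_eq_zero_of_mem_ker_adjoint {h : Y}
    (hh : h ∈ LinearMap.ker (adjoint A : Y →ₗ[𝕜] X)) (u : X) : ⟪h, A u⟫_𝕜 = 0 := by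
  rw [← adjoint_inner_left, show adjoint A h = 0 from hh, inner_zero_left]

theorem ContinuousLinearMap.inner_apply_eq_of_adjoint_apply_eq_smul {r : ℝ} {x : X} {y : Y}
    (h : adjoint A y = (r : 𝕜) • x) (u : X) : ⟪y, A u⟫_𝕜 = r * ⟪x, u⟫_𝕜 := by
  rw [← adjoint_inner_left, h, inner_smul_left, RCLike.conj_ofReal]

theorem summable_inv_sq_mul_norm_inner_apply (hμ : ∀ n, μ n ≠ 0) (hφ : Orthonormal 𝕜 φ)
    (hAg : ∀ n, ContinuousLinearMap.adjoint A (g n) = (μ n : 𝕜) • φ n) (u : X) :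
    Summable fun n => (1 / μ n ^ 2) * ‖⟪g n, A u⟫_𝕜‖ ^ 2 := by
  have hcoeff : ∀ n, (1 / μ n ^ 2) * ‖⟪g n, A u⟫_𝕜‖ ^ 2 = ‖⟪φ n, u⟫_𝕜‖ ^ 2 := fun n => by
    rw [A.inner_apply_eq_of_adjoint_apply_eq_smul (hAg n), norm_mul, RCLike.norm_ofReal, mul_pow,
      sq_abs, one_div, inv_mul_cancel_left₀ (pow_ne_zero 2 (hμ n))]
  simpa only [hcoeff] using hφ.inner_products_summable u

theorem apply_tsum_inv_mul_inner_smul (hμ : ∀ n, μ n ≠ 0) (hφ : Orthonormal 𝕜 φ)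
    (hg : Orthonormal 𝕜 g) (hAφ : ∀ n, A (φ n) = (μ n : 𝕜) • g n) {f : Y}
    (hf : f ∈ (Submodule.span 𝕜 (Set.range g)).topologicalClosure)
    (hsum : Summable fun n => (1 / μ n ^ 2) * ‖⟪g n, f⟫_𝕜‖ ^ 2) :
    A (∑' n, ((μ n : 𝕜)⁻¹ * ⟪g n, f⟫_𝕜) • φ n) = f := by
  have hsum' : Summable fun n => ‖(μ n : 𝕜)⁻¹ * ⟪g n, f⟫_𝕜‖ ^ 2 := by
    simpa only [norm_mul, norm_inv, RCLike.norm_ofReal, mul_pow, inv_pow, sq_abs, one_div]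
      using hsum
  conv_rhs => rw [← hg.tsum_inner_smul_eq_of_mem_closure_span hf]
  rw [A.map_tsum (hφ.summable_smul_of_summable_norm_sq hsum')]
  refine tsum_congr fun n => ?_
  rw [map_smul, hAφ n, smul_smul, mul_right_comm,
    inv_mul_cancel₀ (RCLike.ofReal_ne_zero.2 (hμ n)), one_mul]

end SingularSystem

theorem picard_theorem_general
    {X Y : Type*}
    [NormedAddCommGroup X] [InnerProductSpace ℂ X] [CompleteSpace X]
    [NormedAddCommGroup Y] [InnerProductSpace ℂ Y] [CompleteSpace Y]
    (A : X →L[ℂ] Y)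
    (μ : ℕ → ℝ) (φ : ℕ → X) (g : ℕ → Y)
    (hμ : ∀ n, 0 < μ n)
    (hφ : Orthonormal ℂ φ) (hg : Orthonormal ℂ g)
    (hAφ : ∀ n, A (φ n) = (μ n : ℂ) • g n)
    (hAg : ∀ n, ContinuousLinearMap.adjoint A (g n) = (μ n : ℂ) • φ n)
    (hspan : (Submodule.span ℂ (Set.range g)).topologicalClosure =
      (LinearMap.ker (ContinuousLinearMap.adjoint A : Y →ₗ[ℂ] X))ᗮ)
    (f : Y) :
    ((∃ u : X, A u = f) ↔
      ((∀ h ∈ LinearMap.ker (ContinuousLinearMap.adjoint A : Y →ₗ[ℂ] X), ⟪h, f⟫ = 0) ∧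
        Summable (fun n => (1 / (μ n) ^ 2) * ‖⟪g n, f⟫‖ ^ 2))) ∧
    ((∀ h ∈ LinearMap.ker (ContinuousLinearMap.adjoint A : Y →ₗ[ℂ] X), ⟪h, f⟫ = 0) →
      Summable (fun n => (1 / (μ n) ^ 2) * ‖⟪g n, f⟫‖ ^ 2) →
      A (∑' n, (((μ n : ℂ))⁻¹ * ⟪g n, f⟫) • φ n) = f) := by
  have hμ₀ : ∀ n, μ n ≠ 0 := fun n => (hμ n).ne'
  have solution (hperp : f ∈ (LinearMap.ker (ContinuousLinearMap.adjoint A : Y →ₗ[ℂ] X))ᗮ) :=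
    apply_tsum_inv_mul_inner_smul hμ₀ hφ hg hAφ (hspan ▸ hperp)
  refine ⟨⟨?_, fun ⟨hperp, hsum⟩ => ⟨_, solution hperp hsum⟩⟩, solution⟩
  rintro ⟨u, rfl⟩
  exact ⟨fun h hh => A.inner_apply_eq_zero_of_mem_ker_adjoint hh u,
    summable_inv_sq_mul_norm_inner_apply hμ₀ hφ hAg u⟩

/-- Picard's theorem: Let `A : X → Y` be a compact linear
operator between Hilbert spaces with singular system `(μ_n, φ_n, g_n)`
(complete in the sense that `{g_n}` spans `N(A*)ᗮ`). The equation `Aφ = f` is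
solvable iff `f ∈ N(A*)ᗮ` and `Σ μ_n⁻² |(f, g_n)|² < ∞`; in this case
`φ = Σ μ_n⁻¹ (f, g_n) φ_n` is a solution. -/
theorem picard_theorem
    {X Y : Type*}
    [NormedAddCommGroup X] [InnerProductSpace ℂ X] [CompleteSpace X]
    [NormedAddCommGroup Y] [InnerProductSpace ℂ Y] [CompleteSpace Y]
    (A : X →L[ℂ] Y) (hAcomp : IsCompactOperator A)
    (μ : ℕ → ℝ) (φ : ℕ → X) (g : ℕ → Y)
    (hμ : ∀ n, 0 < μ n)
    (hφ : Orthonormal ℂ φ) (hg : Orthonormal ℂ g)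
    (hAφ : ∀ n, A (φ n) = (μ n : ℂ) • g n)
    (hAg : ∀ n, ContinuousLinearMap.adjoint A (g n) = (μ n : ℂ) • φ n)
    (hspan : (Submodule.span ℂ (Set.range g)).topologicalClosure =
      (LinearMap.ker (ContinuousLinearMap.adjoint A : Y →ₗ[ℂ] X))ᗮ)
    (f : Y) :
    ((∃ u : X, A u = f) ↔
      ((∀ h ∈ LinearMap.ker (ContinuousLinearMap.adjoint A : Y →ₗ[ℂ] X), ⟪h, f⟫ = 0) ∧
        Summable (fun n => (1 / (μ n) ^ 2) * ‖⟪g n, f⟫‖ ^ 2))) ∧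
    ((∀ h ∈ LinearMap.ker (ContinuousLinearMap.adjoint A : Y →ₗ[ℂ] X), ⟪h, f⟫ = 0) →
      Summable (fun n => (1 / (μ n) ^ 2) * ‖⟪g n, f⟫‖ ^ 2) →
      A (∑' n, (((μ n : ℂ))⁻¹ * ⟪g n, f⟫) • φ n) = f) :=
  picard_theorem_general A μ φ g hμ hφ hg hAφ hAg hspan f
end
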